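/- For the 6×6 complex matrices S = [[1,1],[1,−1]] ⊗ S₃ and T = diag(1,i) ⊗ diag(1, e^{2πi/7}, e^{10πi/7}), one has p₊ · p₋ = D², where p₊ = Σ_j S_{0j}² T_{jj}, p₋ = Σ_j S_{0j}² T_{jj}^{−1}, and D² = Σ_j S_{0j}². -/

import Mathlib

open Kronecker

/-- `d = 2 cos(π/7)`. -/
noncomputable def d : ℝ := 2 * Real.cos (Real.pi / 7)

/-- The 3×3 matrix with rows `(1, d, d²−1)`, `(d, −(d²−1), 1)`, `(d²−1, 1, −d)`,
viewed over `ℂ`. -/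
noncomputable def S₃ : Matrix (Fin 3) (Fin 3) ℂ :=
  !![1, (d : ℂ), (d : ℂ) ^ 2 - 1;
     (d : ℂ), -((d : ℂ) ^ 2 - 1), 1;
     (d : ℂ) ^ 2 - 1, 1, -(d : ℂ)]

/-- The 6×6 complex matrix `S = [[1,1],[1,−1]] ⊗ S₃` (Kronecker product). -/
noncomputable def S : Matrix (Fin 2 × Fin 3) (Fin 2 × Fin 3) ℂ :=
  (!![1, 1; 1, -1] : Matrix (Fin 2) (Fin 2) ℂ) ⊗ₖ S₃

/-- The 6×6 diagonal complex matrix `T = diag(1,i) ⊗ diag(1, e^{2πi/7}, e^{10πi/7})`. -/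
noncomputable def T : Matrix (Fin 2 × Fin 3) (Fin 2 × Fin 3) ℂ :=
  (Matrix.diagonal ![1, Complex.I]) ⊗ₖ
    (Matrix.diagonal ![1, Complex.exp (2 * Real.pi * Complex.I / 7),
      Complex.exp (10 * Real.pi * Complex.I / 7)])

/-- `p₊ = Σ_j S_{0j}² T_{jj}` (the first row of `S` is the row indexed by `(0,0)`). -/
noncomputable def pPlus : ℂ :=
  ∑ k : Fin 2 × Fin 3, (S ((0 : Fin 2), (0 : Fin 3)) k) ^ 2 * T k k

/-- `p₋ = Σ_j S_{0j}² T_{jj}⁻¹`. -/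
noncomputable def pMinus : ℂ :=
  ∑ k : Fin 2 × Fin 3, (S ((0 : Fin 2), (0 : Fin 3)) k) ^ 2 * (T k k)⁻¹

/-- `D² = Σ_j S_{0j}²`. -/
noncomputable def Dsq : ℂ :=
  ∑ k : Fin 2 × Fin 3, (S ((0 : Fin 2), (0 : Fin 3)) k) ^ 2

/-!
Both sums are multiplicative under the Kronecker product, since `S_{0,(i,j)}² T_{(i,j)}` factors
as a product over `i` and over `j`. The `2 × 2` factor contributes `(1 + i)(1 - i) = 2`.
For the `3 × 3` factor write `ζ = e^{2πi/7}`: then `d² = 2 + ζ + ζ⁻¹` lies in `ℤ[ζ]`, and modulo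
`ζ⁷ = 1` and `1 + ζ + ⋯ + ζ⁶ = 0` its two sums reduce to `1 - ζ² - ζ³ + ζ⁵` and its conjugate
`1 + ζ² - ζ⁴ - ζ⁵`, whose product is `1 + d² + (d² - 1)²`.
-/

open Complex

theorem Matrix.sum_kronecker_sq_mul {R l m n p : Type*} [CommSemiring R] [Fintype n] [Fintype p]
    (A : Matrix l n R) (B : Matrix m p R) (i : l) (j : m) (f : n → R) (g : p → R) :
    ∑ k : n × p, (A ⊗ₖ B) (i, j) k ^ 2 * (f k.1 * g k.2) =
      (∑ k, A i k ^ 2 * f k) * ∑ k, B j k ^ 2 * g k := by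
  simp only [Matrix.kroneckerMap_apply, Fintype.sum_prod_type, Finset.sum_mul_sum, mul_pow]
  exact Finset.sum_congr rfl fun _ _ => Finset.sum_congr rfl fun _ _ => by ring

theorem Matrix.sum_kronecker_sq {R l m n p : Type*} [CommSemiring R] [Fintype n] [Fintype p]
    (A : Matrix l n R) (B : Matrix m p R) (i : l) (j : m) :
    ∑ k : n × p, (A ⊗ₖ B) (i, j) k ^ 2 = (∑ k, A i k ^ 2) * ∑ k, B j k ^ 2 := by
  simpa only [Pi.one_apply, mul_one] using A.sum_kronecker_sq_mul B i j 1 1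

theorem IsPrimitiveRoot.gaussSum_mul_gaussSum_inv_of_seven {K : Type*} [Field K] {ζ : K}
    (hζ : IsPrimitiveRoot ζ 7) :
    let δ := 2 + ζ + ζ⁻¹
    (1 + δ * ζ + (δ - 1) ^ 2 * ζ ^ 5) * (1 + δ * ζ⁻¹ + (δ - 1) ^ 2 * (ζ ^ 5)⁻¹) =
      1 + δ + (δ - 1) ^ 2 := by
  intro δ
  have h7 : ζ ^ 7 = 1 := hζ.pow_eq_one
  have hΦ : ∑ i ∈ Finset.range 7, ζ ^ i = 0 := hζ.geom_sum_eq_zero (by norm_num)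
  simp only [Finset.sum_range_succ, Finset.sum_range_zero, zero_add, pow_zero, pow_one] at hΦ
  have hinv : ζ⁻¹ = ζ ^ 6 := inv_eq_of_mul_eq_one_right (by rw [← pow_succ', h7])
  have hinv5 : (ζ ^ 5)⁻¹ = ζ ^ 2 := inv_eq_of_mul_eq_one_right (by rw [← pow_add, h7])
  simp only [δ, hinv, hinv5]
  have hplus : 1 + (2 + ζ + ζ ^ 6) * ζ + (2 + ζ + ζ ^ 6 - 1) ^ 2 * ζ ^ 5 =
      1 - ζ ^ 2 - ζ ^ 3 + ζ ^ 5 := by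
    linear_combination (2 + ζ ^ 3 + 2 * ζ ^ 4 + 2 * ζ ^ 5 + ζ ^ 10) * h7 + 2 * hΦ
  have hminus : 1 + (2 + ζ + ζ ^ 6) * ζ ^ 6 + (2 + ζ + ζ ^ 6 - 1) ^ 2 * ζ ^ 2 =
      1 + ζ ^ 2 - ζ ^ 4 - ζ ^ 5 := by
    linear_combination (2 + 2 * ζ + 2 * ζ ^ 2 + ζ ^ 5 + ζ ^ 7) * h7 + 2 * hΦ
  rw [hplus, hminus]
  linear_combination (1 + ζ - ζ ^ 2 - ζ ^ 3 - ζ ^ 5) * h7 - 2 * hΦ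

noncomputable abbrev ζ₇ : ℂ := exp (2 * Real.pi * I / 7)

theorem isPrimitiveRoot_ζ₇ : IsPrimitiveRoot ζ₇ 7 := by
  simpa only [Nat.cast_ofNat] using isPrimitiveRoot_exp 7 (by norm_num)

theorem ofReal_d_sq : (d : ℂ) ^ 2 = 2 + ζ₇ + ζ₇⁻¹ := by
  rw [ζ₇, ← exp_neg, d]
  push_cast
  rw [mul_pow, cos_sq, cos]
  ring_nf

theorem T_apply_self (k : Fin 2 × Fin 3) : T k k = ![1, I] k.1 * ![1, ζ₇, ζ₇ ^ 5] k.2 := by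
  have h : exp (10 * Real.pi * I / 7) = ζ₇ ^ 5 := by
    rw [← exp_nat_mul]; congr 1; push_cast; ring
  simp only [T, Matrix.kroneckerMap_apply, Matrix.diagonal_apply_eq, h]

theorem semion_gaussSum_mul :
    (∑ i, !![(1 : ℂ), 1; 1, -1] 0 i ^ 2 * ![1, I] i) *
        ∑ i, !![(1 : ℂ), 1; 1, -1] 0 i ^ 2 * (![1, I] i)⁻¹ =
      ∑ i, !![(1 : ℂ), 1; 1, -1] 0 i ^ 2 := by
  simp only [Fin.sum_univ_two, Matrix.of_apply, Matrix.cons_val', Matrix.cons_val_zero,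
    Matrix.cons_val_one, Matrix.cons_val_fin_one, one_pow, mul_one, one_mul, inv_one, inv_I]
  linear_combination -I_sq

theorem S₃_gaussSum_mul :
    (∑ j, S₃ 0 j ^ 2 * ![1, ζ₇, ζ₇ ^ 5] j) * ∑ j, S₃ 0 j ^ 2 * (![1, ζ₇, ζ₇ ^ 5] j)⁻¹ =
      ∑ j, S₃ 0 j ^ 2 := by
  simp only [S₃, Fin.sum_univ_three, Matrix.of_apply, Matrix.cons_val', Matrix.cons_val_zero,
    Matrix.cons_val_one, Matrix.cons_val, Matrix.cons_val_fin_one, one_pow, mul_one, inv_one]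
  rw [ofReal_d_sq]
  exact isPrimitiveRoot_ζ₇.gaussSum_mul_gaussSum_inv_of_seven

theorem pPlus_mul_pMinus : pPlus * pMinus = Dsq := by
  rw [pPlus, pMinus, Dsq]
  simp only [T_apply_self, mul_inv]
  rw [S, Matrix.sum_kronecker_sq_mul, Matrix.sum_kronecker_sq_mul (f := fun i => (![1, I] i)⁻¹)
    (g := fun j => (![1, ζ₇, ζ₇ ^ 5] j)⁻¹), Matrix.sum_kronecker_sq, mul_mul_mul_comm,
    semion_gaussSum_mul, S₃_gaussSum_mul]
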